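/- arXiv:2404.07457 — 3 statements merged into one kernel-verified Lean document; each statement's English description precedes it below -/
import Mathlib

section
/- Let Y_1,...,Y_n be nonnegative integers with Ȳ > 0, and define g(ν) = (1/n)Σ_{i=1}^n [Ψ(ν+Y_i) − Ψ(ν)] − log(1 + Ȳ/ν) for ν > 0. Then lim_{ν→0+} ν·g(ν) = 1 − f_0/n > 0, where f_0 = #{i : Y_i = 0}; consequently g(ν) → ∞ as ν → 0+. -/
open Filter Real Topology

private lemma telescope (Ψ : ℝ → ℝ) (hΨ : ∀ x : ℝ, 0 < x → Ψ (x + 1) - Ψ x = 1 / x) :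
    ∀ (k : ℕ) (ν : ℝ), 0 < ν → Ψ (ν + k) - Ψ ν = ∑ j ∈ Finset.range k, 1 / (ν + j) := by
  intro k
  induction k with
  | zero => intro ν hν; simp
  | succ k ih =>
    intro ν hν
    have hk : (0:ℝ) < ν + k := by positivity
    have h1 := hΨ (ν + k) hk
    have h2 := ih ν hν
    rw [Finset.sum_range_succ, ← h2, ← h1]
    push_cast
    ring

/-- With `g(ν) = (1/n)Σᵢ[Ψ(ν+Yᵢ) − Ψ(ν)] − log(1+Ȳ/ν)` and
`Ȳ > 0`, one has `lim_{ν→0⁺} ν g(ν) = 1 − f₀/n > 0` (`f₀` the number of zero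
observations); consequently `g(ν) → ∞` as `ν → 0⁺`. -/
theorem g_limit_at_zero (n : ℕ) (hn : 0 < n) (Y : Fin n → ℕ)
    (Ψ : ℝ → ℝ) (hΨ : ∀ x : ℝ, 0 < x → Ψ (x + 1) - Ψ x = 1 / x)
    (Ybar : ℝ) (hYbar : Ybar = (∑ i, (Y i : ℝ)) / n) (hpos : 0 < Ybar)
    (g : ℝ → ℝ)
    (hg : ∀ ν : ℝ, g ν = (1 / n) * ∑ i, (Ψ (ν + Y i) - Ψ ν)
      - Real.log (1 + Ybar / ν))
    (f0 : ℕ) (hf0 : f0 = (Finset.univ.filter (fun i => Y i = 0)).card) :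
    Filter.Tendsto (fun ν : ℝ => ν * g ν) (nhdsWithin 0 (Set.Ioi 0))
      (nhds (1 - (f0 : ℝ) / n)) ∧
    0 < 1 - (f0 : ℝ) / n ∧
    Filter.Tendsto g (nhdsWithin 0 (Set.Ioi 0)) Filter.atTop := by
  have hn' : (0:ℝ) < n := by exact_mod_cast hn
  -- f0 < n
  have hf0lt : f0 < n := by
    obtain ⟨i, hi⟩ : ∃ i, Y i ≠ 0 := by
      by_contra h
      push_neg at h
      simp only [h] at hYbar
      simp [hYbar] at hpos
    rw [hf0]
    calc (Finset.univ.filter (fun i => Y i = 0)).card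
        < Finset.univ.card := Finset.card_lt_card (by
          refine Finset.ssubset_iff_of_subset (Finset.filter_subset _ _) |>.2 ⟨i, Finset.mem_univ i, ?_⟩
          simp [hi])
      _ = n := by simp
  have hL : 0 < 1 - (f0:ℝ)/n := by
    rw [sub_pos, div_lt_one hn']
    exact_mod_cast hf0lt
  -- limit of ν/(ν+j)
  have hfrac : ∀ j : ℕ, Tendsto (fun ν : ℝ => ν * (1 / (ν + j))) (𝓝[>] 0)
      (𝓝 (if j = 0 then 1 else 0)) := by
    intro j
    rcases Nat.eq_zero_or_pos j with hj | hj
    · subst hj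
      simp only [if_pos rfl]
      apply tendsto_const_nhds.congr'
      filter_upwards [self_mem_nhdsWithin] with ν (hν : 0 < ν)
      field_simp
      simp
    · have hj' : (0:ℝ) < j := by exact_mod_cast hj
      have : Tendsto (fun ν : ℝ => ν * (1 / (ν + j))) (𝓝 0) (𝓝 (0 * (1 / (0 + j)))) := by
        apply Tendsto.mul tendsto_id
        apply Tendsto.div tendsto_const_nhds (tendsto_id.add tendsto_const_nhds)
        positivity
      simp only [zero_mul] at this
      simp only [if_neg hj.ne']
      exact this.mono_left nhdsWithin_le_nhds
  -- limit of ν*(Ψ(ν+k)-Ψν)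
  have hterm : ∀ i : Fin n, Tendsto (fun ν : ℝ => ν * (Ψ (ν + Y i) - Ψ ν)) (𝓝[>] 0)
      (𝓝 (if Y i = 0 then 0 else 1)) := by
    intro i
    have hsum : Tendsto (fun ν : ℝ => ∑ j ∈ Finset.range (Y i), ν * (1 / (ν + j))) (𝓝[>] 0)
        (𝓝 (∑ j ∈ Finset.range (Y i), if j = 0 then 1 else 0)) :=
      tendsto_finset_sum _ fun j _ => hfrac j
    have hv : (∑ j ∈ Finset.range (Y i), if j = 0 then (1:ℝ) else 0)
        = if Y i = 0 then 0 else 1 := by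
      rcases Nat.eq_zero_or_pos (Y i) with h | h
      · simp [h]
      · rw [Finset.sum_ite_eq' (Finset.range (Y i)) 0 (fun _ => (1:ℝ))]
        simp [Finset.mem_range, h, h.ne']
    rw [hv] at hsum
    apply hsum.congr'
    filter_upwards [self_mem_nhdsWithin] with ν (hν : 0 < ν)
    rw [telescope Ψ hΨ (Y i) ν hν, Finset.mul_sum]
  -- log part
  have hlog : Tendsto (fun ν : ℝ => ν * Real.log (1 + Ybar / ν)) (𝓝[>] 0) (𝓝 0) := by
    have h1 : Tendsto (fun ν : ℝ => ν * Real.log (ν + Ybar)) (𝓝[>] 0)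
        (𝓝 (0 * Real.log (0 + Ybar))) := by
      apply Tendsto.mono_left _ nhdsWithin_le_nhds
      exact tendsto_id.mul ((Real.continuousAt_log (by positivity)).tendsto.comp
        (tendsto_id.add tendsto_const_nhds))
    have h2 : Tendsto (fun ν : ℝ => Real.log ν * ν) (𝓝[>] 0) (𝓝 0) := by
      have := tendsto_log_mul_rpow_nhdsGT_zero (r := 1) zero_lt_one
      simpa [Real.rpow_one] using this
    have h3 : Tendsto (fun ν : ℝ => ν * Real.log (ν + Ybar) - Real.log ν * ν) (𝓝[>] 0)
        (𝓝 (0 * Real.log (0 + Ybar) - 0)) := h1.sub h2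
    rw [zero_mul, sub_zero] at h3
    apply h3.congr'
    filter_upwards [self_mem_nhdsWithin] with ν (hν : 0 < ν)
    have : 1 + Ybar / ν = (ν + Ybar) / ν := by field_simp
    rw [this, Real.log_div (by positivity) hν.ne']
    ring
  -- total sum
  have hsum : Tendsto (fun ν : ℝ => ∑ i, ν * (Ψ (ν + Y i) - Ψ ν)) (𝓝[>] 0)
      (𝓝 (∑ i, if Y i = 0 then (0:ℝ) else 1)) := tendsto_finset_sum _ fun i _ => hterm i
  have hsval : (∑ i, if Y i = 0 then (0:ℝ) else 1) = (n : ℝ) - f0 := by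
    rw [Finset.sum_ite, Finset.sum_const, Finset.sum_const]
    have : (Finset.univ.filter (fun i => ¬ Y i = 0)).card = n - f0 := by
      rw [hf0, Finset.filter_not, Finset.card_sdiff_of_subset (Finset.filter_subset _ _)]
      simp
    simp [this, Nat.cast_sub hf0lt.le]
  rw [hsval] at hsum
  have hmain : Tendsto (fun ν : ℝ => ν * g ν) (𝓝[>] 0) (𝓝 (1 - (f0:ℝ)/n)) := by
    have h := ((hsum.const_mul ((1:ℝ)/n)).sub hlog)
    have hval : (1:ℝ)/n * ((n:ℝ) - f0) - 0 = 1 - (f0:ℝ)/n := by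
      field_simp
      ring
    rw [hval] at h
    apply h.congr'
    filter_upwards [self_mem_nhdsWithin] with ν (hν : 0 < ν)
    have hms : ∑ i, ν * (Ψ (ν + (Y i : ℝ)) - Ψ ν) = ν * ∑ i, (Ψ (ν + (Y i : ℝ)) - Ψ ν) :=
      (Finset.mul_sum _ _ _).symm
    rw [hg ν, hms]
    ring
  refine ⟨hmain, hL, ?_⟩
  have hinv : Tendsto (fun ν : ℝ => ν⁻¹) (𝓝[>] (0:ℝ)) atTop := tendsto_inv_nhdsGT_zero
  have := Filter.Tendsto.pos_mul_atTop hL hmain hinv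
  apply this.congr'
  filter_upwards [self_mem_nhdsWithin] with ν (hν : 0 < ν)
  rw [mul_comm ν (g ν), mul_assoc, mul_inv_cancel₀ hν.ne', mul_one]
end

section
/- Let Y_1,...,Y_n be nonnegative integers with Ȳ > 0, and define g(ν) = (1/n)Σ_{i=1}^n [Ψ(ν+Y_i) − Ψ(ν)] − log(1 + Ȳ/ν). Then lim_{ν→∞} ν² g(ν) = (Ȳ − S_n²)/2, where S_n² = (1/n)Σ_{i=1}^n (Y_i − Ȳ)². In particular, g(ν) → 0 as ν → ∞. -/
/-!
For `ν > 0` the functional equation telescopes to `Ψ(ν + m) - Ψ ν = ∑_{k<m} 1/(ν+k)`, and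
`ν² (1/(ν+k) - 1/ν) = -k + k²/(ν+k) → -k`, so `ν² (Ψ(ν+m) - Ψ ν - m/ν) → -m(m-1)/2`.
Splitting off `Ȳ/ν = (1/n) ∑ Yᵢ/ν`, the remaining term is `ν² (Ȳ/ν - log(1 + Ȳ/ν)) → Ȳ²/2`
by the second-order Taylor bound for `log (1 + t)`. Adding up,
`lim ν² g = -(1/n) ∑ Yᵢ(Yᵢ-1)/2 + Ȳ²/2 = (Ȳ - Sₙ²)/2`.
-/

open Filter Finset Real Topology

lemma add_natCast_sub_eq_sum_range_one_div {Ψ : ℝ → ℝ}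
    (hΨ : ∀ x : ℝ, 0 < x → Ψ (x + 1) - Ψ x = 1 / x) {ν : ℝ} (hν : 0 < ν) (m : ℕ) :
    Ψ (ν + m) - Ψ ν = ∑ k ∈ range m, 1 / (ν + k) := by
  have htelescope := sum_range_sub (fun k : ℕ => Ψ (ν + k)) m
  simp only [Nat.cast_zero, add_zero] at htelescope
  rw [← htelescope]
  refine sum_congr rfl fun k _ => ?_
  rw [← hΨ _ (by positivity)]
  push_cast
  ring_nf

lemma sum_range_natCast (m : ℕ) : ∑ k ∈ range m, (k : ℝ) = m * (m - 1) / 2 := by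
  induction m with
  | zero => simp
  | succ m ih => rw [sum_range_succ, ih]; push_cast; ring

lemma sample_variance_eq_mean_sq_sub_sq_mean {n : ℕ} (hn : n ≠ 0) (y : Fin n → ℝ) :
    (1 / n) * ∑ i, (y i - (∑ j, y j) / n) ^ 2 = (1 / n) * ∑ i, y i ^ 2 - ((∑ j, y j) / n) ^ 2 := by
  simp only [sub_sq, sum_add_distrib, sum_sub_distrib, ← sum_mul, ← mul_sum, sum_const, card_univ,
    Fintype.card_fin, nsmul_eq_mul]
  field_simp
  ring

lemma abs_sub_log_one_add_sub_sq_div_two_le {t : ℝ} (ht : |t| ≤ 1 / 2) :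
    |t - log (1 + t) - t ^ 2 / 2| ≤ 2 * |t| ^ 3 := by
  have h := abs_log_sub_add_sum_range_le (x := -t) (by rw [abs_neg]; linarith) 2
  simp only [sum_range_succ, sum_range_zero, abs_neg, sub_neg_eq_add] at h
  calc |t - log (1 + t) - t ^ 2 / 2|
      = |-t ^ (0 + 1) / (0 + 1) + (-t) ^ (1 + 1) / (1 + 1) + log (1 + t)| := by
        rw [← abs_neg]; push_cast; ring_nf
    _ ≤ |t| ^ 3 / (1 - |t|) := by simpa using h
    _ ≤ 2 * |t| ^ 3 := by
        rw [div_le_iff₀ (by linarith)]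
        nlinarith [pow_nonneg (abs_nonneg t) 3]

lemma tendsto_sq_mul_div_sub_log_one_add_div (x : ℝ) :
    Tendsto (fun ν : ℝ => ν ^ 2 * (x / ν - log (1 + x / ν))) atTop (𝓝 (x ^ 2 / 2)) := by
  rw [← tendsto_sub_nhds_zero_iff]
  refine squeeze_zero_norm' ?_ ((tendsto_const_nhds (x := 2 * |x| ^ 3)).div_atTop tendsto_id)
  filter_upwards [eventually_gt_atTop (2 * |x|), eventually_gt_atTop 0] with ν hνx hν
  have ht : |x / ν| ≤ 1 / 2 := by
    rw [abs_div, abs_of_pos hν, div_le_iff₀ hν]; linarith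
  have hsq : x ^ 2 / 2 = ν ^ 2 * ((x / ν) ^ 2 / 2) := by field_simp
  calc ‖ν ^ 2 * (x / ν - log (1 + x / ν)) - x ^ 2 / 2‖
      = ν ^ 2 * |x / ν - log (1 + x / ν) - (x / ν) ^ 2 / 2| := by
        rw [hsq, ← mul_sub, norm_mul, norm_pow, Real.norm_eq_abs, Real.norm_eq_abs, sq_abs]
    _ ≤ ν ^ 2 * (2 * |x / ν| ^ 3) := by gcongr; exact abs_sub_log_one_add_sub_sq_div_two_le ht
    _ = 2 * |x| ^ 3 / id ν := by
        rw [abs_div, abs_of_pos hν, id]; field_simp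

lemma tendsto_sq_mul_sum_range_one_div_add_sub_div (m : ℕ) :
    Tendsto (fun ν : ℝ => ν ^ 2 * (∑ k ∈ range m, 1 / (ν + k) - m / ν)) atTop
      (𝓝 (-∑ k ∈ range m, (k : ℝ))) := by
  rw [← sum_neg_distrib]
  have hterm (k : ℕ) : Tendsto (fun ν : ℝ => -(k : ℝ) + k ^ 2 / (ν + k)) atTop (𝓝 (-k)) := by
    simpa using tendsto_const_nhds.add
      (tendsto_const_nhds.div_atTop (tendsto_atTop_add_const_right _ (k : ℝ) tendsto_id))
  refine (tendsto_finsetSum _ fun k _ => hterm k).congr' ?_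
  filter_upwards [eventually_gt_atTop 0] with ν hν
  have hm : (m : ℝ) / ν = ∑ k ∈ range m, 1 / ν := by simp [div_eq_mul_inv]
  rw [hm, ← sum_sub_distrib, mul_sum]
  refine sum_congr rfl fun k _ => ?_
  field_simp
  ring

lemma tendsto_zero_of_tendsto_sq_mul {f : ℝ → ℝ} {L : ℝ}
    (h : Tendsto (fun ν => ν ^ 2 * f ν) atTop (𝓝 L)) : Tendsto f atTop (𝓝 0) := by
  have hinv_mul := ((tendsto_pow_atTop two_ne_zero).inv_tendsto_atTop).mul h
  rw [zero_mul] at hinv_mul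
  refine hinv_mul.congr' ?_
  filter_upwards [eventually_ne_atTop 0] with ν hν
  simp only [Pi.inv_apply]
  field_simp

theorem g_limit_at_infty_general (n : ℕ) (hn : 0 < n) (Y : Fin n → ℕ)
    (Ψ : ℝ → ℝ) (hΨ : ∀ x : ℝ, 0 < x → Ψ (x + 1) - Ψ x = 1 / x)
    (Ybar : ℝ) (hYbar : Ybar = (∑ i, (Y i : ℝ)) / n)
    (S2 : ℝ) (hS2 : S2 = (1 / n) * ∑ i, ((Y i : ℝ) - Ybar) ^ 2)
    (g : ℝ → ℝ)
    (hg : ∀ ν : ℝ, g ν = (1 / n) * ∑ i, (Ψ (ν + Y i) - Ψ ν)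
      - Real.log (1 + Ybar / ν)) :
    Filter.Tendsto (fun ν : ℝ => ν ^ 2 * g ν) Filter.atTop
      (nhds ((Ybar - S2) / 2)) ∧
    Filter.Tendsto g Filter.atTop (nhds 0) := by
  have hsum := ((tendsto_finsetSum univ fun i _ =>
    tendsto_sq_mul_sum_range_one_div_add_sub_div (Y i)).const_mul (1 / n : ℝ)).add
    (tendsto_sq_mul_div_sub_log_one_add_div Ybar)
  have hval : (1 / n : ℝ) * ∑ i, -∑ k ∈ range (Y i), (k : ℝ) + Ybar ^ 2 / 2 = (Ybar - S2) / 2 := by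
    rw [hS2, hYbar, sample_variance_eq_mean_sq_sub_sq_mean hn.ne']
    simp only [sum_range_natCast, sum_neg_distrib, ← sum_div, mul_sub, sum_sub_distrib, mul_one, sq]
    ring
  rw [hval] at hsum
  have hlim : Tendsto (fun ν : ℝ => ν ^ 2 * g ν) atTop (𝓝 ((Ybar - S2) / 2)) := by
    refine hsum.congr' ?_
    filter_upwards [eventually_gt_atTop 0] with ν hν
    simp only [hg, add_natCast_sub_eq_sum_range_one_div hΨ hν, mul_sub, sum_sub_distrib, ← mul_sum,
      ← sum_div, hYbar]
    ring
  exact ⟨hlim, tendsto_zero_of_tendsto_sq_mul hlim⟩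

/-- With `g(ν) = (1/n)Σᵢ[Ψ(ν+Yᵢ) − Ψ(ν)] − log(1+Ȳ/ν)` and
`Ȳ > 0`, one has `lim_{ν→∞} ν² g(ν) = (Ȳ − Sₙ²)/2`; in particular
`g(ν) → 0` as `ν → ∞`. -/
theorem g_limit_at_infty (n : ℕ) (hn : 0 < n) (Y : Fin n → ℕ)
    (Ψ : ℝ → ℝ) (hΨ : ∀ x : ℝ, 0 < x → Ψ (x + 1) - Ψ x = 1 / x)
    (Ybar : ℝ) (hYbar : Ybar = (∑ i, (Y i : ℝ)) / n) (hpos : 0 < Ybar)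
    (S2 : ℝ) (hS2 : S2 = (1 / n) * ∑ i, ((Y i : ℝ) - Ybar) ^ 2)
    (g : ℝ → ℝ)
    (hg : ∀ ν : ℝ, g ν = (1 / n) * ∑ i, (Ψ (ν + Y i) - Ψ ν)
      - Real.log (1 + Ybar / ν)) :
    Filter.Tendsto (fun ν : ℝ => ν ^ 2 * g ν) Filter.atTop
      (nhds ((Ybar - S2) / 2)) ∧
    Filter.Tendsto g Filter.atTop (nhds 0) :=
  g_limit_at_infty_general n hn Y Ψ hΨ Ybar hYbar S2 hS2 g hg
end

section
/- If Y ~ NB(ν, p) with ν > 0 and 0 < p < 1 (PMF f(y) = Γ(ν+y)/(Γ(ν)Γ(y+1)) p^ν (1-p)^y), then E[Ψ(ν + Y)] = Ψ(ν) − log p, where Ψ is the digamma function. Consequently G(ν) := E[Ψ(ν+Y)] − Ψ(ν) − log(1 + μ/ν) = 0, where μ = ν(1−p)/p is the mean of Y. -/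
open Finset Filter

set_option maxHeartbeats 1000000


noncomputable def nbA (ν : ℝ) : ℕ → ℝ
  | 0 => 1
  | n + 1 => nbA ν n * (ν + n) / (n + 1)

noncomputable def nbH (ν : ℝ) (n : ℕ) : ℝ := ∑ k ∈ Finset.range n, 1 / (ν + k)

lemma nbA_zero (ν : ℝ) : nbA ν 0 = 1 := rfl
lemma nbA_succ (ν : ℝ) (n : ℕ) : nbA ν (n + 1) = nbA ν n * (ν + n) / (n + 1) := rfl

lemma nbA_pos {ν : ℝ} (hν : 0 < ν) : ∀ n, 0 < nbA ν n := by
  intro n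
  induction n with
  | zero => norm_num [nbA_zero]
  | succ n ih =>
    rw [nbA_succ]
    have h1 : (0:ℝ) < ν + n := by positivity
    have h2 : (0:ℝ) < (n:ℝ) + 1 := by positivity
    positivity

lemma nbA_gamma {ν : ℝ} (hν : 0 < ν) (n : ℕ) :
    nbA ν n = Real.Gamma (ν + n) / (Real.Gamma ν * Real.Gamma (n + 1)) := by
  induction n with
  | zero => simp [nbA_zero, Real.Gamma_one, (Real.Gamma_pos_of_pos hν).ne']
  | succ n ih =>
    have hνn : (0:ℝ) < ν + n := by positivity
    have h1 : Real.Gamma (ν + (n + 1 : ℕ)) = (ν + n) * Real.Gamma (ν + n) := by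
      push_cast
      rw [show ν + ((n : ℝ) + 1) = (ν + n) + 1 by ring, Real.Gamma_add_one hνn.ne']
    have h2 : Real.Gamma (((n : ℕ) + 1 : ℕ) + 1) = ((n : ℝ) + 1) * Real.Gamma (n + 1) := by
      push_cast
      rw [Real.Gamma_add_one (by positivity)]
    have hΓν : Real.Gamma ν ≠ 0 := (Real.Gamma_pos_of_pos hν).ne'
    have hΓn : Real.Gamma ((n : ℝ) + 1) ≠ 0 :=
      (Real.Gamma_pos_of_pos (by positivity)).ne'
    rw [nbA_succ, ih]
    push_cast at h1 h2 ⊢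
    rw [h1, h2]
    field_simp

lemma nbA_eq_one_add {ν : ℝ} (n : ℕ) :
    nbA ν n = 1 + (ν - 1) * ∑ i ∈ Finset.range n, nbA ν i / (i + 1) := by
  induction n with
  | zero => simp [nbA_zero]
  | succ n ih =>
    rw [Finset.sum_range_succ, nbA_succ]
    have h : ((n:ℝ) + 1) ≠ 0 := by positivity
    field_simp
    field_simp at ih
    linear_combination ((n:ℝ)+1) * ih

lemma nbA_mul_nbH {ν : ℝ} (hν : 0 < ν) (n : ℕ) :
    nbA ν n * nbH ν n = ∑ j ∈ Finset.range n, nbA ν (n - 1 - j) / (j + 1) := by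
  induction n with
  | zero => simp [nbH]
  | succ n ih =>
    have hνn : (0:ℝ) < ν + n := by positivity
    have hn1 : ((n:ℝ) + 1) ≠ 0 := by positivity
    have key : ((n:ℝ) + 1) * ∑ j ∈ Finset.range (n+1), nbA ν (n + 1 - 1 - j) / (j + 1)
        = (ν + n) * (∑ j ∈ Finset.range n, nbA ν (n - 1 - j) / (j + 1)) + nbA ν n := by
      have e1 : ∀ j ∈ Finset.range n,
          ((n:ℝ) + 1) * (nbA ν (n - j) / (j + 1))
          = (ν + n) * (nbA ν (n - 1 - j) / (j + 1)) + (ν - 1) * (nbA ν (n - 1 - j) / ((n:ℝ) - j)) := by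
        intro j hj
        rw [Finset.mem_range] at hj
        have hsub : n - j = (n - 1 - j) + 1 := by omega
        have hcast : ((n - 1 - j : ℕ) : ℝ) = (n : ℝ) - 1 - j := by
          rw [Nat.sub_sub, Nat.cast_sub (by omega : 1 + j ≤ n)]
          push_cast; ring
        rw [hsub, nbA_succ, hcast,
          show (n:ℝ) - 1 - (j:ℝ) + 1 = (n:ℝ) - (j:ℝ) by ring]
        have hj1 : ((j:ℝ) + 1) ≠ 0 := by positivity
        have hnj : ((n:ℝ) - j) ≠ 0 := by
          have : (j:ℝ) < n := by exact_mod_cast hj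
          linarith
        field_simp
        ring
      calc ((n:ℝ) + 1) * ∑ j ∈ Finset.range (n+1), nbA ν (n + 1 - 1 - j) / (j + 1)
          = ∑ j ∈ Finset.range (n+1), ((n:ℝ) + 1) * (nbA ν (n - j) / (j + 1)) := by
            rw [Finset.mul_sum]; exact Finset.sum_congr rfl fun j _ => by norm_num
        _ = (∑ j ∈ Finset.range n, ((n:ℝ) + 1) * (nbA ν (n - j) / (j + 1))) + 1 := by
            rw [Finset.sum_range_succ]
            simp [nbA_zero]
            field_simp
        _ = (∑ j ∈ Finset.range n, ((ν + n) * (nbA ν (n - 1 - j) / (j + 1))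
              + (ν - 1) * (nbA ν (n - 1 - j) / ((n:ℝ) - j)))) + 1 := by
            rw [Finset.sum_congr rfl e1]
        _ = (ν + n) * (∑ j ∈ Finset.range n, nbA ν (n - 1 - j) / (j + 1))
              + ((ν - 1) * ∑ j ∈ Finset.range n, nbA ν (n - 1 - j) / ((n:ℝ) - j) + 1) := by
            rw [Finset.sum_add_distrib, Finset.mul_sum, Finset.mul_sum]; ring
        _ = (ν + n) * (∑ j ∈ Finset.range n, nbA ν (n - 1 - j) / (j + 1)) + nbA ν n := by
            congr 1
            have hrefl : ∑ j ∈ Finset.range n, nbA ν (n - 1 - j) / ((n:ℝ) - j)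
                = ∑ i ∈ Finset.range n, nbA ν i / (i + 1) := by
              rw [← Finset.sum_range_reflect (fun i => nbA ν i / ((i:ℝ) + 1)) n]
              refine Finset.sum_congr rfl fun j hj => ?_
              rw [Finset.mem_range] at hj
              congr 1
              rw [Nat.sub_sub, Nat.cast_sub (by omega : 1 + j ≤ n)]
              push_cast; ring
            rw [hrefl]
            linear_combination - nbA_eq_one_add (ν := ν) n
    have hH : nbH ν (n + 1) = nbH ν n + 1 / (ν + n) := by
      simp [nbH, Finset.sum_range_succ]
    have h2 : ∑ j ∈ Finset.range (n+1), nbA ν (n + 1 - 1 - j) / (j + 1)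
        = ((ν + n) * (nbA ν n * nbH ν n) + nbA ν n) / ((n:ℝ) + 1) := by
      rw [ih, eq_div_iff hn1]
      linear_combination key
    rw [hH, nbA_succ, h2]
    field_simp

lemma summable_nbA_deriv {ν : ℝ} (hν : 0 < ν) {r : ℝ} (hr0 : 0 < r) (hr1 : r < 1) :
    Summable (fun n : ℕ => nbA ν n * (n * r ^ (n - 1))) := by
  apply summable_of_ratio_test_tendsto_lt_one hr1
  · filter_upwards [eventually_ge_atTop 1] with n hn
    have h1 : (0:ℝ) < (n:ℝ) := by exact_mod_cast hn
    have := nbA_pos hν n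
    positivity
  · have hev : ∀ᶠ n : ℕ in atTop,
        ‖nbA ν (n+1) * ((n+1 : ℕ) * r ^ ((n+1) - 1))‖ / ‖nbA ν n * (n * r ^ (n - 1))‖
          = r + (ν * r) / n := by
      filter_upwards [eventually_ge_atTop 1] with n hn
      obtain ⟨m, rfl⟩ := Nat.exists_eq_add_of_le hn
      set k := 1 + m with hk
      have hkpos : (0:ℝ) < (k:ℝ) := by positivity
      have hA := nbA_pos hν k
      have hA1 := nbA_pos hν (k+1)
      have hterm : (0:ℝ) < nbA ν k * (k * r ^ (k - 1)) := by positivity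
      have hterm1 : (0:ℝ) < nbA ν (k+1) * ((k+1 : ℕ) * r ^ ((k+1) - 1)) := by positivity
      rw [Real.norm_eq_abs, Real.norm_eq_abs, abs_of_pos hterm, abs_of_pos hterm1]
      rw [nbA_succ]
      have hks : k - 1 + 1 = k := by omega
      have hpow : r ^ ((k+1) - 1) = r ^ (k-1) * r := by
        rw [show (k+1) - 1 = (k-1) + 1 by omega, pow_succ]
      rw [hpow]
      have hrk : r ^ (k - 1) ≠ 0 := by positivity
      have hk1 : ((k:ℝ) + 1) ≠ 0 := by positivity
      field_simp
      push_cast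
      ring
    refine Tendsto.congr' (EventuallyEq.symm hev) ?_
    have h0 : Tendsto (fun n : ℕ => (ν * r) / n) atTop (nhds 0) :=
      Tendsto.div_atTop tendsto_const_nhds tendsto_natCast_atTop_atTop
    simpa using (tendsto_const_nhds (x := r)).add h0

lemma hasSum_nbA_rpow {ν : ℝ} (hν : 0 < ν) {q : ℝ} (hq0 : 0 < q) (hq1 : q < 1) :
    HasSum (fun n : ℕ => nbA ν n * q ^ n) ((1 - q) ^ (-ν : ℝ)) := by
  set r : ℝ := (1 + q) / 2 with hrdef
  have hr0 : 0 < r := by positivity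
  have hr1 : r < 1 := by rw [hrdef]; linarith
  have hqr : q < r := by rw [hrdef]; linarith
  set t : Set ℝ := Set.Ioo (-r) r with htdef
  have ht : IsOpen t := isOpen_Ioo
  have h't : IsPreconnected t := (convex_Ioo _ _).isPreconnected
  have h0t : (0:ℝ) ∈ t := by constructor <;> simp [hr0] <;> linarith
  have hqt : q ∈ t := ⟨by linarith, hqr⟩
  set u : ℕ → ℝ := fun n => nbA ν n * (n * r ^ (n - 1)) with hudef
  have hu : Summable u := summable_nbA_deriv hν hr0 hr1
  set g : ℕ → ℝ → ℝ := fun n x => nbA ν n * x ^ n with hgdef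
  set g' : ℕ → ℝ → ℝ := fun n x => nbA ν n * (n * x ^ (n - 1)) with hg'def
  have hg : ∀ n : ℕ, ∀ y ∈ t, HasDerivAt (g n) (g' n y) y := fun n y _ =>
    (hasDerivAt_pow n y).const_mul (nbA ν n)
  have hg' : ∀ n : ℕ, ∀ y ∈ t, ‖g' n y‖ ≤ u n := by
    intro n y hy
    have hA := (nbA_pos hν n).le
    have hyr : |y| ≤ r := by
      rw [abs_le]; exact ⟨hy.1.le, hy.2.le⟩
    calc ‖g' n y‖ = nbA ν n * (n * |y| ^ (n-1)) := by
          simp [hg'def, abs_mul, abs_of_nonneg hA, abs_pow, Nat.abs_cast]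
      _ ≤ nbA ν n * (n * r ^ (n-1)) := by
          gcongr
      _ = u n := rfl
  have hg0 : Summable (fun n => g n 0) := by
    apply summable_of_ne_finset_zero (s := {0})
    intro n hn
    have : n ≠ 0 := by simpa using hn
    simp [hgdef, zero_pow this]
  -- summability on t
  have hsum : ∀ y ∈ t, Summable (fun n => g n y) := fun y hy =>
    summable_of_summable_hasDerivAt_of_isPreconnected hu ht h't hg hg' h0t hg0 hy
  set G : ℝ → ℝ := fun x => ∑' n, g n x with hGdef
  have hderiv : ∀ y ∈ t, HasDerivAt G (∑' n, g' n y) y := fun y hy =>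
    hasDerivAt_tsum_of_isPreconnected hu ht h't hg hg' h0t hg0 hy
  -- the ODE identity
  have hode : ∀ y ∈ t, (1 - y) * (∑' n, g' n y) = ν * G y := by
    intro y hy
    have hsum' : Summable (fun n => g' n y) :=
      Summable.of_norm_bounded hu (fun n => hg' n y hy)
    have hD : HasSum (fun n => g' n y) (∑' n, g' n y) := hsum'.hasSum
    set D := ∑' n, g' n y with hDdef
    have h1 : HasSum (fun n => g' (n + 1) y) D := by
      refine (hasSum_nat_add_iff (f := fun n => g' n y) 1).2 ?_
      simpa [hg'def] using hD
    have h2 : HasSum (fun n => (ν + n) * (nbA ν n * y ^ n)) D := by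
      have : (fun n : ℕ => g' (n + 1) y) = fun n => (ν + n) * (nbA ν n * y ^ n) := by
        funext n
        simp only [hg'def, Nat.add_sub_cancel, nbA_succ]
        have : ((n:ℝ) + 1) ≠ 0 := by positivity
        field_simp
        push_cast
        ring
      rwa [this] at h1
    have h3 : HasSum (fun n => y * g' n y) (y * D) := hD.mul_left y
    have h4 : HasSum (fun n => ν * (nbA ν n * y ^ n)) ((1 - y) * D) := by
      have he : (fun n : ℕ => (ν + n) * (nbA ν n * y ^ n) - y * g' n y)
          = fun n => ν * (nbA ν n * y ^ n) := by
        funext n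
        cases n with
        | zero => simp [hg'def]
        | succ m =>
          simp only [hg'def, Nat.add_sub_cancel]
          rw [pow_succ]
          push_cast
          ring
      have := h2.sub h3
      rw [he] at this
      rw [show (1 - y) * D = D - y * D by ring]
      exact this
    have h5 : HasSum (fun n => ν * (nbA ν n * y ^ n)) (ν * G y) :=
      (hsum y hy).hasSum.mul_left ν
    exact h4.unique h5
  -- constancy of F
  set F : ℝ → ℝ := fun x => (1 - x) ^ (ν:ℝ) * G x with hFdef
  have hFderiv : ∀ x ∈ t, HasDerivAt F 0 x := by
    intro x hx
    have hx1 : (0:ℝ) < 1 - x := by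
      have := hx.2; simp only [htdef, Set.mem_Ioo] at hx
      linarith [hx.2, hr1]
    have h1 : HasDerivAt (fun x : ℝ => 1 - x) (-1) x := by
      simpa using (hasDerivAt_id x).const_sub 1
    have h3 := (h1.rpow_const (p := ν) (Or.inl hx1.ne')).mul (hderiv x hx)
    have hval : -1 * ν * (1 - x) ^ (ν - 1) * G x + (1 - x) ^ (ν:ℝ) * (∑' n, g' n x) = 0 := by
      have hode' := hode x hx
      have hpow : (1 - x) ^ (ν - 1) = (1 - x) ^ (ν:ℝ) / (1 - x) := Real.rpow_sub_one hx1.ne' ν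
      have hD : (∑' n, g' n x) = ν * G x / (1 - x) := by
        field_simp at hode' ⊢
        linarith [hode']
      rw [hpow, hD]
      field_simp
      ring
    rw [hval] at h3
    exact h3
  have hconst : F q = F 0 := by
    refine (convex_Ioo (-r) r).is_const_of_fderivWithin_eq_zero (𝕜 := ℝ) (f := F) ?_ ?_ hqt h0t
    · intro x hx
      exact ((hFderiv x hx).differentiableAt).differentiableWithinAt
    · intro x hx
      rw [DifferentiableAt.fderivWithin ((hFderiv x hx).differentiableAt)
        (ht.uniqueDiffWithinAt hx)]
      have := (hFderiv x hx).hasFDerivAt.fderiv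
      rw [this]
      ext z
      simp
  have hG0 : G 0 = 1 := by
    have : G 0 = ∑' n, g n 0 := rfl
    rw [this, tsum_eq_single 0 (fun n hn => by simp [hgdef, zero_pow hn])]
    simp [hgdef, nbA_zero]
  have hF0 : F 0 = 1 := by simp [hFdef, hG0, Real.one_rpow]
  have hq1' : (0:ℝ) < 1 - q := by linarith
  have hGq : G q = (1 - q) ^ (-ν : ℝ) := by
    have h1q : (1 - q) ^ (ν:ℝ) * G q = 1 := hconst.trans hF0
    have hpow : (0:ℝ) < (1 - q) ^ (ν:ℝ) := Real.rpow_pos_of_pos hq1' ν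
    rw [Real.rpow_neg hq1'.le]
    field_simp
    linarith [h1q]
  have hGq' : (∑' n, g n q) = (1 - q) ^ (-ν : ℝ) := hGq
  have hfin := (hsum q hqt).hasSum
  rw [hGq'] at hfin
  exact hfin


lemma hasSum_nbA_nbH {ν : ℝ} (hν : 0 < ν) {q : ℝ} (hq0 : 0 < q) (hq1 : q < 1) :
    HasSum (fun n : ℕ => nbA ν n * nbH ν n * q ^ n)
      ((1 - q) ^ (-ν : ℝ) * (-Real.log (1 - q))) := by
  set A : ℕ → ℝ := fun n => nbA ν n * q ^ n with hAdef
  set B : ℕ → ℝ := fun n => q ^ (n + 1) / (n + 1) with hBdef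
  have hA : HasSum A ((1 - q) ^ (-ν : ℝ)) := hasSum_nbA_rpow hν hq0 hq1
  have hB : HasSum B (-Real.log (1 - q)) :=
    Real.hasSum_pow_div_log_of_abs_lt_one (by rw [abs_of_pos hq0]; exact hq1)
  have hAn : Summable fun n => ‖A n‖ := by
    have : (fun n => ‖A n‖) = A := by
      funext n
      have : 0 < A n := by have := nbA_pos hν n; positivity
      simp [Real.norm_eq_abs, abs_of_pos this]
    rw [this]; exact hA.summable
  have hBn : Summable fun n => ‖B n‖ := by
    have : (fun n => ‖B n‖) = B := by
      funext n
      have : 0 < B n := by positivity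
      simp [Real.norm_eq_abs, abs_of_pos this]
    rw [this]; exact hB.summable
  have hC := hasSum_sum_range_mul_of_summable_norm hAn hBn
  rw [hA.tsum_eq, hB.tsum_eq] at hC
  have hCn : ∀ n : ℕ, (∑ k ∈ Finset.range (n + 1), A k * B (n - k))
      = nbA ν (n + 1) * nbH ν (n + 1) * q ^ (n + 1) := by
    intro n
    have step1 : ∀ k ∈ Finset.range (n + 1),
        A k * B (n - k) = q ^ (n + 1) * (nbA ν k / (((n - k : ℕ) : ℝ) + 1)) := by
      intro k hk
      rw [Finset.mem_range] at hk
      simp only [hAdef, hBdef]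
      have hq : q ^ (n + 1) = q ^ k * q ^ ((n - k) + 1) := by
        rw [← pow_add]; congr 1; omega
      rw [hq]; ring
    rw [Finset.sum_congr rfl step1, ← Finset.mul_sum]
    have step2 : (∑ k ∈ Finset.range (n + 1), nbA ν k / (((n - k : ℕ) : ℝ) + 1))
        = ∑ j ∈ Finset.range (n + 1), nbA ν ((n + 1) - 1 - j) / ((j : ℝ) + 1) := by
      rw [← Finset.sum_range_reflect (fun j => nbA ν ((n+1) - 1 - j) / ((j : ℝ) + 1)) (n+1)]
      refine Finset.sum_congr rfl fun k hk => ?_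
      rw [Finset.mem_range] at hk
      have e1 : n + 1 - 1 - (n + 1 - 1 - k) = k := by omega
      have e2 : n + 1 - 1 - k = n - k := by omega
      rw [e1, e2]
    rw [step2, ← nbA_mul_nbH hν (n + 1)]
    ring
  have hC2 : HasSum (fun n => nbA ν (n + 1) * nbH ν (n + 1) * q ^ (n + 1))
      ((1 - q) ^ (-ν : ℝ) * (-Real.log (1 - q))) := by
    have : (fun n => ∑ k ∈ Finset.range (n + 1), A k * B (n - k))
        = fun n => nbA ν (n + 1) * nbH ν (n + 1) * q ^ (n + 1) := funext hCn
    rwa [this] at hC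
  have h2 := (hasSum_nat_add_iff (f := fun n => nbA ν n * nbH ν n * q ^ n) 1).1 hC2
  simpa [nbH] using h2

/-- If `Y ~ NB(ν,p)` then `E[Ψ(ν+Y)] = Ψ(ν) − log p`, where `Ψ`
is the digamma function; consequently
`G(ν) = E[Ψ(ν+Y)] − Ψ(ν) − log(1+μ/ν) = 0` with `μ = ν(1−p)/p`. -/
theorem nb_digamma_expectation (ν : ℝ) (hν : 0 < ν) (p : ℝ)
    (hp : p ∈ Set.Ioo (0 : ℝ) 1)
    (Ψ : ℝ → ℝ) (hΨ : ∀ x : ℝ, 0 < x → Ψ (x + 1) - Ψ x = 1 / x)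
    (f : ℕ → ℝ)
    (hf : ∀ y : ℕ, f y = Real.Gamma (ν + y) /
      (Real.Gamma ν * Real.Gamma (y + 1)) * p ^ ν * (1 - p) ^ y) :
    HasSum (fun y : ℕ => f y * Ψ (ν + y)) (Ψ ν - Real.log p) ∧
    (∑' y : ℕ, f y * Ψ (ν + y)) - Ψ ν
      - Real.log (1 + (ν * (1 - p) / p) / ν) = 0 := by
  obtain ⟨hp0, hp1⟩ := hp
  set q : ℝ := 1 - p with hqdef
  have hq0 : 0 < q := by simp [hqdef]; linarith
  have hq1 : q < 1 := by simp [hqdef]; linarith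
  have h1q : 1 - q = p := by simp [hqdef]
  have hfA : ∀ y : ℕ, f y = p ^ (ν : ℝ) * (nbA ν y * q ^ y) := by
    intro y
    rw [hf y, nbA_gamma hν y]
    push_cast
    ring
  have hppow : (0:ℝ) < p ^ (ν : ℝ) := Real.rpow_pos_of_pos hp0 ν
  have hpinv : p ^ (ν : ℝ) * p ^ (-ν : ℝ) = 1 := by
    rw [Real.rpow_neg hp0.le]
    exact mul_inv_cancel₀ hppow.ne'
  have hA : HasSum (fun n : ℕ => nbA ν n * q ^ n) (p ^ (-ν : ℝ)) := by
    have := hasSum_nbA_rpow hν hq0 hq1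
    rwa [h1q] at this
  have hSf : HasSum f 1 := by
    have := hA.mul_left (p ^ (ν : ℝ))
    rw [hpinv] at this
    refine this.congr_fun fun y => hfA y
  have hSh : HasSum (fun y => f y * nbH ν y) (-Real.log p) := by
    have h0 := hasSum_nbA_nbH hν hq0 hq1
    rw [h1q] at h0
    have := h0.mul_left (p ^ (ν : ℝ))
    rw [← mul_assoc, hpinv, one_mul] at this
    refine this.congr_fun fun y => ?_
    rw [hfA y]
    ring
  have hΨtel : ∀ n : ℕ, Ψ (ν + n) = Ψ ν + nbH ν n := by
    intro n
    induction n with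
    | zero => simp [nbH]
    | succ n ih =>
      have hνn : (0:ℝ) < ν + n := by positivity
      have h := hΨ (ν + n) hνn
      have hcast : ν + ((n : ℕ) + 1 : ℕ) = (ν + n) + 1 := by push_cast; ring
      rw [hcast]
      have hH : nbH ν (n + 1) = nbH ν n + 1 / (ν + n) := by
        simp [nbH, Finset.sum_range_succ]
      rw [hH]
      linarith [h, ih]
  have hmain : HasSum (fun y : ℕ => f y * Ψ (ν + y)) (Ψ ν - Real.log p) := by
    have h1 := (hSf.mul_right (Ψ ν)).add hSh
    rw [one_mul] at h1
    have he : (fun y : ℕ => f y * Ψ ν + f y * nbH ν y) = fun y => f y * Ψ (ν + y) := by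
      funext y
      rw [hΨtel y]
      ring
    rw [he] at h1
    have : Ψ ν + -Real.log p = Ψ ν - Real.log p := by ring
    rwa [this] at h1
  refine ⟨hmain, ?_⟩
  rw [hmain.tsum_eq]
  have hν' : ν ≠ 0 := hν.ne'
  have hp' : p ≠ 0 := hp0.ne'
  have harg : 1 + (ν * (1 - p) / p) / ν = p⁻¹ := by
    field_simp
    ring
  rw [harg, Real.log_inv]
  ring
end
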